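/- arXiv:1007.2453 — 3 statements merged into one kernel-verified Lean document; each statement's English description precedes it below -/
import Mathlib

section
/- Let G = (V,E) be a finite graph with orientation ε, and A, B finite abelian groups of orders p, q. For edge subsets X, Y ⊆ E, the group T_X(G,ε;A) × F_Y(G,ε;B) of tension-flows (f,g) with f vanishing on X and g vanishing on Y has cardinality p^{r(E) − r(X)} · q^{n(E − Y)}. -/
/-- `f : E → A` is a tension of the digraph `tl, hd : E → V`: it is the
coboundary of a potential `p : V → A`. -/
def IsTension {V E A : Type} [AddCommGroup A] (tl hd : E → V) (f : E → A) : Prop :=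
  ∃ p : V → A, ∀ e, f e = p (tl e) - p (hd e)

/-- `g : E → B` is a flow of the digraph `tl, hd : E → V`: conservation holds
at every vertex. -/
def IsFlow {V E B : Type} [Fintype E] [DecidableEq V] [AddCommGroup B]
    (tl hd : E → V) (g : E → B) : Prop :=
  ∀ v : V, ∑ e ∈ Finset.univ.filter (fun e => tl e = v), g e
         = ∑ e ∈ Finset.univ.filter (fun e => hd e = v), g e

/-- The rank `r⟨X⟩ = |V| - c⟨X⟩` of the spanning subgraph `(V, X)`, where
`c⟨X⟩` is its number of connected components. -/
noncomputable def grank {V E : Type} [Fintype V] (tl hd : E → V) (X : Finset E) : ℕ :=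
  Fintype.card V -
    Nat.card (Quot (fun a b : V =>
      ∃ e ∈ X, (tl e = a ∧ hd e = b) ∨ (tl e = b ∧ hd e = a)))

/-!
Tensions vanishing on `X` are the coboundaries of potentials constant along the edges of `X`,
i.e. of functions on the components of `(V, X)`; such a potential has zero coboundary iff it is
constant on the components of `G`. Hence `p ^ c(X) = |T_X| * p ^ c(E)`.

Flows vanishing on `Y` form the kernel of the boundary map on functions supported on `E - Y`.
Its image consists of the vertex functions whose sum over every component of `(V, E - Y)` is
zero: such a function is a sum of `δ_a - δ_b` with `a, b` in one component, and these are
boundaries of paths. Hence `q ^ |E - Y| * q ^ c(E - Y) = |F_Y| * q ^ |V|`.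
-/

open Finset

section Quot

variable {α β : Type*} (r : α → α → Prop)

def respectingEquiv : {f : α → β // ∀ a b, r a b → f a = f b} ≃ (Quot r → β) where
  toFun f := Quot.lift f.1 f.2
  invFun g := ⟨g ∘ Quot.mk r, fun _ _ h => congrArg g (Quot.sound h)⟩
  left_inv _ := rfl
  right_inv _ := funext (Quot.ind fun _ => rfl)

theorem Nat.card_subtype_respecting [Finite α] :
    Nat.card {f : α → β // ∀ a b, r a b → f a = f b} = Nat.card β ^ Nat.card (Quot r) := by
  rw [Nat.card_congr (respectingEquiv r), Nat.card_fun]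

theorem Nat.card_quot_le [Finite α] : Nat.card (Quot r) ≤ Nat.card α :=
  Nat.card_le_card_of_surjective _ Quot.mk_surjective

end Quot

theorem AddSubgroup.card_eq_card_ker_inf_mul_card_map {G G' : Type*} [AddGroup G] [AddGroup G']
    (f : G →+ G') (K : AddSubgroup G) :
    Nat.card K = Nat.card ↥(f.ker ⊓ K) * Nat.card (K.map f) := by
  rw [← AddSubgroup.relIndex_ker, ← AddSubgroup.inf_relIndex_right, ← relIndex_bot_left,
    ← relIndex_bot_left, relIndex_mul_relIndex _ _ _ bot_le inf_le_right]

theorem Nat.eq_pow_sub_of_mul_pow_eq {q a b n : ℕ} (hq : 0 < q) (h : n * q ^ a = q ^ b) :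
    n = q ^ (b - a) := by
  obtain rfl | hq1 := (Nat.one_le_iff_ne_zero.mpr hq.ne').eq_or_lt
  · simpa using h
  have hab : a ≤ b := (Nat.pow_dvd_pow_iff_le_right hq1).mp ⟨n, by rw [← h, mul_comm]⟩
  refine Nat.eq_of_mul_eq_mul_right (pow_pos hq a) ?_
  rw [h, ← pow_add, Nat.sub_add_cancel hab]

section SumFibers

variable {V Q B : Type*} [Fintype V] [DecidableEq Q] [AddCommGroup B] (π : V → Q)

def sumFibers : (V → B) →+ (Q → B) where
  toFun h q := ∑ v with π v = q, h v
  map_zero' := by ext; simp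
  map_add' _ _ := by ext; simp [sum_add_distrib]

theorem sumFibers_apply (h : V → B) (q : Q) : sumFibers π h q = ∑ v with π v = q, h v := rfl

theorem sumFibers_single [DecidableEq V] (v : V) (c : B) :
    sumFibers π (Pi.single v c) = Pi.single (π v) c := by
  ext q
  simp [sumFibers_apply, Pi.single_apply, eq_comm]

theorem sumFibers_surjective [Fintype Q] [DecidableEq V] (hπ : Function.Surjective π) :
    Function.Surjective (sumFibers (B := B) π) := by
  obtain ⟨s, hs⟩ := hπ.hasRightInverse
  refine fun k => ⟨∑ q, Pi.single (s q) (k q), ?_⟩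
  simp only [map_sum, sumFibers_single, hs _, Finset.univ_sum_single]

theorem sum_single_comp_eq_zero_of_sumFibers_eq_zero [Fintype Q] [DecidableEq V] (s : Q → V)
    {h : V → B} (hh : sumFibers π h = 0) :
    ∑ v, (Pi.single (s (π v)) (h v) : V → B) = 0 := by
  rw [← Finset.sum_fiberwise univ π]
  refine Finset.sum_eq_zero fun q _ => ?_
  calc ∑ v with π v = q, (Pi.single (s (π v)) (h v) : V → B)
      = ∑ v with π v = q, Pi.single (s q) (h v) :=
        Finset.sum_congr rfl fun v hv => by rw [(Finset.mem_filter.mp hv).2]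
    _ = Pi.single (s q) (sumFibers π h q) :=
        (map_sum (AddMonoidHom.single (fun _ => B) (s q)) _ _).symm
    _ = 0 := by rw [hh, Pi.zero_apply, Pi.single_zero]

theorem mem_of_sumFibers_eq_zero [Fintype Q] [DecidableEq V] (hπ : Function.Surjective π)
    (S : AddSubgroup (V → B))
    (hS : ∀ a b, π a = π b → ∀ c, Pi.single a c - Pi.single b c ∈ S)
    {h : V → B} (hh : sumFibers π h = 0) : h ∈ S := by
  obtain ⟨s, hs⟩ := hπ.hasRightInverse
  have hdecomp : h = ∑ v, (Pi.single v (h v) - Pi.single (s (π v)) (h v)) := by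
    rw [sum_sub_distrib, sum_single_comp_eq_zero_of_sumFibers_eq_zero π s hh, sub_zero,
      Finset.univ_sum_single]
  rw [hdecomp]
  exact S.sum_mem fun v _ => hS _ _ (hs (π v)).symm _

end SumFibers

theorem single_sub_single_mem_of_quot_eq {V B : Type*} [DecidableEq V] [AddCommGroup B]
    {r : V → V → Prop} (S : AddSubgroup (V → B))
    (hS : ∀ a b, r a b → ∀ c, Pi.single a c - Pi.single b c ∈ S) {a b : V}
    (hab : Quot.mk r a = Quot.mk r b) (c : B) : Pi.single a c - Pi.single b c ∈ S := by
  have hgen := Quot.eqvGen_exact hab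
  clear hab
  induction hgen with
  | rel x y hxy => exact hS x y hxy c
  | refl x => simp
  | symm x y _ ih => simpa using S.neg_mem ih
  | trans x y z _ _ ihxy ihyz => simpa using S.add_mem ihxy ihyz

section Graph

variable {V E : Type} (tl hd : E → V)

def edgeRel (X : Finset E) (a b : V) : Prop :=
  ∃ e ∈ X, (tl e = a ∧ hd e = b) ∨ (tl e = b ∧ hd e = a)

abbrev Components (X : Finset E) : Type := Quot (edgeRel tl hd X)

theorem grank_eq [Fintype V] (X : Finset E) :
    grank tl hd X = Fintype.card V - Nat.card (Components tl hd X) := rfl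

theorem card_components_le [Fintype V] (X : Finset E) :
    Nat.card (Components tl hd X) ≤ Fintype.card V :=
  Nat.card_eq_fintype_card (α := V) ▸ Nat.card_quot_le _

def vanishingOn {A : Type} [AddCommGroup A] (X : Finset E) : AddSubgroup (E → A) where
  carrier := {f | ∀ e ∈ X, f e = 0}
  zero_mem' _ _ := rfl
  add_mem' hf hg e he := by simp [hf e he, hg e he]
  neg_mem' hf e he := by simp [hf e he]

theorem mem_vanishingOn {A : Type} [AddCommGroup A] {X : Finset E} {f : E → A} :
    f ∈ vanishingOn X ↔ ∀ e ∈ X, f e = 0 := Iff.rfl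

theorem card_vanishingOn {A : Type} [AddCommGroup A] [Fintype E] [DecidableEq E] [Finite A]
    (Y : Finset E) :
    Nat.card (vanishingOn (A := A) Y) = Nat.card A ^ #Yᶜ := by
  have hfactor : ∀ e,
      Nat.card {a : A // e ∈ Y → a = 0} = if e ∈ Yᶜ then Nat.card A else 1 := by
    intro e
    by_cases he : e ∈ Y <;> simp [he]
  calc Nat.card (vanishingOn (A := A) Y)
      = Nat.card (∀ e, {a : A // e ∈ Y → a = 0}) :=
        Nat.card_congr (Equiv.subtypePiEquivPi (p := fun e a => e ∈ Y → a = 0))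
    _ = Nat.card A ^ #Yᶜ := by
      rw [Nat.card_pi, Finset.prod_congr rfl fun e _ => hfactor e, prod_ite_mem, univ_inter,
        prod_const]

section Tension

variable {A : Type} [AddCommGroup A]

def coboundary : (V → A) →+ (E → A) where
  toFun pot e := pot (tl e) - pot (hd e)
  map_zero' := by ext; simp
  map_add' _ _ := by ext; simp only [Pi.add_apply]; abel

@[simp]
theorem coboundary_apply (pot : V → A) (e : E) :
    coboundary tl hd pot e = pot (tl e) - pot (hd e) := rfl

theorem mem_comap_coboundary_vanishingOn (X : Finset E) (pot : V → A) :
    pot ∈ (vanishingOn X).comap (coboundary tl hd) ↔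
      ∀ a b, edgeRel tl hd X a b → pot a = pot b := by
  simp only [AddSubgroup.mem_comap, mem_vanishingOn, coboundary_apply, sub_eq_zero]
  constructor
  · rintro h a b ⟨e, he, ⟨rfl, rfl⟩ | ⟨rfl, rfl⟩⟩
    exacts [h e he, (h e he).symm]
  · exact fun h e he => h _ _ ⟨e, he, .inl ⟨rfl, rfl⟩⟩

theorem card_comap_coboundary_vanishingOn [Finite V] (X : Finset E) :
    Nat.card ((vanishingOn X).comap (coboundary (A := A) tl hd)) =
      Nat.card A ^ Nat.card (Components tl hd X) := by
  rw [← Nat.card_subtype_respecting]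
  exact Nat.card_congr (Equiv.subtypeEquivRight (mem_comap_coboundary_vanishingOn tl hd X))

theorem ker_coboundary [Fintype E] :
    (coboundary (A := A) tl hd).ker = (vanishingOn univ).comap (coboundary tl hd) := by
  ext pot
  simp [vanishingOn, funext_iff]

theorem card_tensions_vanishingOn_mul [Fintype V] [Fintype E] (X : Finset E) :
    Nat.card {f : E → A // IsTension tl hd f ∧ ∀ e ∈ X, f e = 0} *
        Nat.card A ^ Nat.card (Components tl hd univ) =
      Nat.card A ^ Nat.card (Components tl hd X) := by
  have hker : (coboundary (A := A) tl hd).ker ≤ (vanishingOn X).comap (coboundary tl hd) :=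
    fun pot hpot e _ => congrFun hpot e
  have hmap : ∀ f : E → A,
      f ∈ ((vanishingOn X).comap (coboundary tl hd)).map (coboundary tl hd) ↔
      IsTension tl hd f ∧ ∀ e ∈ X, f e = 0 := by
    intro f
    rw [AddSubgroup.map_comap_eq]
    exact and_congr ⟨fun ⟨pot, h⟩ => ⟨pot, fun e => (congrFun h e).symm⟩,
      fun ⟨pot, h⟩ => ⟨pot, funext fun e => (h e).symm⟩⟩ Iff.rfl
  have := AddSubgroup.card_eq_card_ker_inf_mul_card_map (coboundary (A := A) tl hd)
    ((vanishingOn X).comap (coboundary tl hd))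
  rw [inf_of_le_left hker, Nat.card_congr (Equiv.subtypeEquivRight hmap), ker_coboundary,
    card_comap_coboundary_vanishingOn, card_comap_coboundary_vanishingOn] at this
  rw [this, mul_comm]

theorem card_tensions_vanishingOn [Fintype V] [Fintype E] [Finite A] (X : Finset E) :
    Nat.card {f : E → A // IsTension tl hd f ∧ ∀ e ∈ X, f e = 0} =
      Nat.card A ^ (grank tl hd univ - grank tl hd X) := by
  rw [Nat.eq_pow_sub_of_mul_pow_eq Nat.card_pos (card_tensions_vanishingOn_mul tl hd X),
    grank_eq, grank_eq]
  have := card_components_le tl hd X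
  have := card_components_le tl hd (univ : Finset E)
  congr 1
  omega

end Tension

section Flow

variable {B : Type} [AddCommGroup B]

variable [Fintype E] [DecidableEq V]

def boundary : (E → B) →+ (V → B) where
  toFun g v := ∑ e with tl e = v, g e - ∑ e with hd e = v, g e
  map_zero' := by ext; simp
  map_add' _ _ := by ext; simp only [Pi.add_apply, sum_add_distrib]; abel

theorem isFlow_iff_boundary_eq_zero {g : E → B} : IsFlow tl hd g ↔ boundary tl hd g = 0 := by
  simp only [IsFlow, funext_iff, boundary, AddMonoidHom.coe_mk, ZeroHom.coe_mk, Pi.zero_apply,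
    sub_eq_zero]

theorem boundary_single [DecidableEq E] (e : E) (c : B) :
    boundary tl hd (Pi.single e c) = Pi.single (tl e) c - Pi.single (hd e) c := by
  ext v
  simp [boundary, Pi.single_apply, eq_comm]

theorem single_sub_single_mem_map_boundary [DecidableEq E] {Y : Finset E} {a b : V}
    (hab : edgeRel tl hd Yᶜ a b) (c : B) :
    (Pi.single a c - Pi.single b c : V → B) ∈ (vanishingOn Y).map (boundary tl hd) := by
  obtain ⟨e, he, ⟨rfl, rfl⟩ | ⟨rfl, rfl⟩⟩ := hab
  all_goals have hsupp : ∀ c' : B, Pi.single e c' ∈ vanishingOn Y := fun c' e' he' =>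
    Pi.single_eq_of_ne (M := fun _ => B) (ne_of_mem_of_not_mem he' (mem_compl.mp he)) c'
  · exact ⟨Pi.single e c, hsupp c, boundary_single tl hd e c⟩
  · refine ⟨Pi.single e (-c), hsupp (-c), ?_⟩
    rw [boundary_single, Pi.single_neg, Pi.single_neg, neg_sub_neg]

variable [Fintype V]

theorem sumFibers_boundary_eq_zero [DecidableEq E] {Y : Finset E}
    [DecidableEq (Components tl hd Yᶜ)] {g : E → B} (hg : g ∈ vanishingOn Y) :
    sumFibers (Quot.mk (edgeRel tl hd Yᶜ)) (boundary tl hd g) = 0 := by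
  rw [← Finset.univ_sum_single g, map_sum, map_sum]
  refine Finset.sum_eq_zero fun e _ => ?_
  rw [boundary_single, map_sub, sumFibers_single, sumFibers_single]
  by_cases he : e ∈ Y
  · simp [hg e he]
  · rw [Quot.sound ⟨e, mem_compl.mpr he, .inl ⟨rfl, rfl⟩⟩, sub_self]

theorem map_boundary_vanishingOn [DecidableEq E] (Y : Finset E)
    [DecidableEq (Components tl hd Yᶜ)] :
    (vanishingOn Y).map (boundary (B := B) tl hd) =
      (sumFibers (Quot.mk (edgeRel tl hd Yᶜ))).ker := by
  have := Fintype.ofFinite (Components tl hd Yᶜ)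
  refine le_antisymm ?_ fun h hh => mem_of_sumFibers_eq_zero _ Quot.mk_surjective _
    (fun a b hab => single_sub_single_mem_of_quot_eq _
      (fun _ _ => single_sub_single_mem_map_boundary tl hd) hab) hh
  rintro _ ⟨g, hg, rfl⟩
  exact sumFibers_boundary_eq_zero tl hd hg

theorem card_flows_vanishingOn_mul [DecidableEq E] [Finite B] (Y : Finset E) :
    Nat.card {g : E → B // IsFlow tl hd g ∧ ∀ e ∈ Y, g e = 0} *
        Nat.card B ^ Fintype.card V =
      Nat.card B ^ (#Yᶜ + Nat.card (Components tl hd Yᶜ)) := by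
  classical
  have := Fintype.ofFinite (Components tl hd Yᶜ)
  set σ := sumFibers (B := B) (Quot.mk (edgeRel tl hd Yᶜ))
  have hflows : Nat.card ↥((boundary tl hd).ker ⊓ vanishingOn Y) =
      Nat.card {g : E → B // IsFlow tl hd g ∧ ∀ e ∈ Y, g e = 0} :=
    Nat.card_congr <| Equiv.subtypeEquivRight fun g => by
      rw [AddSubgroup.mem_inf, AddMonoidHom.mem_ker, ← isFlow_iff_boundary_eq_zero]; rfl
  have hrange : Nat.card σ.range = Nat.card B ^ Nat.card (Components tl hd Yᶜ) := by
    rw [AddMonoidHom.range_eq_top.mpr (sumFibers_surjective _ Quot.mk_surjective),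
      AddSubgroup.card_top, Nat.card_fun]
  have hV : Nat.card σ.ker * Nat.card σ.range = Nat.card B ^ Fintype.card V := by
    rw [← AddSubgroup.index_ker, AddSubgroup.card_mul_index, Nat.card_fun,
      Nat.card_eq_fintype_card (α := V)]
  have hY := AddSubgroup.card_eq_card_ker_inf_mul_card_map (boundary (B := B) tl hd)
    (vanishingOn Y)
  rw [card_vanishingOn, hflows, map_boundary_vanishingOn] at hY
  rw [pow_add, hY, ← hV, hrange, mul_assoc]

theorem card_flows_vanishingOn [DecidableEq E] [Finite B] (Y : Finset E) :
    Nat.card {g : E → B // IsFlow tl hd g ∧ ∀ e ∈ Y, g e = 0} =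
      Nat.card B ^ (#Yᶜ - grank tl hd Yᶜ) := by
  rw [Nat.eq_pow_sub_of_mul_pow_eq Nat.card_pos (card_flows_vanishingOn_mul tl hd Y), grank_eq]
  have := card_components_le tl hd Yᶜ
  congr 1
  omega

end Flow

end Graph

/-- For edge subsets `X, Y ⊆ E`, the group `T_X × F_Y` of tension-flows `(f,g)`
with `f` vanishing on `X` and `g` vanishing on `Y` has cardinality
`p^{r(E) - r(X)} · q^{n(E - Y)}`. -/
theorem stmt8 {V E A B : Type} [Fintype V] [Fintype E] [DecidableEq V] [DecidableEq E]
    [AddCommGroup A] [Fintype A] [AddCommGroup B] [Fintype B]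
    (tl hd : E → V) (p q : ℕ) (hp : Fintype.card A = p) (hq : Fintype.card B = q)
    (X Y : Finset E) :
    Nat.card {fg : (E → A) × (E → B) //
        IsTension tl hd fg.1 ∧ IsFlow tl hd fg.2 ∧
        (∀ e ∈ X, fg.1 e = 0) ∧ ∀ e ∈ Y, fg.2 e = 0}
    = p ^ (grank tl hd Finset.univ - grank tl hd X) *
      q ^ ((Yᶜ).card - grank tl hd Yᶜ) := by
  subst hp hq
  have hsplit : {fg : (E → A) × (E → B) //
        IsTension tl hd fg.1 ∧ IsFlow tl hd fg.2 ∧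
        (∀ e ∈ X, fg.1 e = 0) ∧ ∀ e ∈ Y, fg.2 e = 0} ≃
      {f : E → A // IsTension tl hd f ∧ ∀ e ∈ X, f e = 0} ×
        {g : E → B // IsFlow tl hd g ∧ ∀ e ∈ Y, g e = 0} :=
    (Equiv.subtypeEquivRight fun _ => by tauto).trans Equiv.subtypeProdEquivProd
  rw [Nat.card_congr hsplit, Nat.card_prod, card_tensions_vanishingOn, card_flows_vanishingOn,
    Nat.card_eq_fintype_card, Nat.card_eq_fintype_card]
end

section
/- Let G be a finite graph with orientation ε, and let A, B be finite abelian groups of orders p, q, with Ω = T(G,ε;A) × F(G,ε;B). Then Whitney's rank generating polynomial satisfies R(G;p,q) = ∑ 2^{|ker f − supp g|}, summed over all tension-flows (f,g) ∈ Ω with supp g ⊆ ker f, where ker f = {e : f(e)=0} and supp g = {e : g(e)≠0}. -/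
open Finset

lemma Nat.eq_pow_sub_of_pow_eq_mul_pow {p a b N : ℕ} (hp : 0 < p) (h : p ^ a = N * p ^ b) :
    N = p ^ (a - b) := by
  obtain rfl | hp1 := (Nat.succ_le_of_lt hp).eq_or_lt
  · simpa using h.symm
  have hba : b ≤ a := (Nat.pow_dvd_pow_iff_le_right hp1).1 ⟨N, h.trans (mul_comm _ _)⟩
  rw [← Nat.pow_div hba hp, h, Nat.mul_div_cancel _ (pow_pos hp b)]

lemma AddSubgroup.card_eq_card_inf_ker_mul_card_map {G H : Type*} [AddGroup G] [AddGroup H]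
    (K : AddSubgroup G) (f : G →+ H) :
    Nat.card K = Nat.card ↥(f.ker ⊓ K) * Nat.card (K.map f) := by
  rw [← relIndex_ker, ← relIndex_bot_left, ← relIndex_bot_left, relIndex_inf_mul_relIndex,
    bot_inf_eq]

namespace TensionFlow

section Pushforward

variable {α β M : Type*} [Fintype α] [DecidableEq β] [AddCommMonoid M]

def pushforward (φ : α → β) : (α → M) →+ (β → M) where
  toFun k := ∑ a, Pi.single (φ a) (k a)
  map_zero' := by simp
  map_add' k l := by simp [Pi.single_add, sum_add_distrib]

lemma pushforward_eq_sum (φ : α → β) (k : α → M) :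
    pushforward φ k = ∑ a, Pi.single (φ a) (k a) :=
  rfl

lemma pushforward_apply (φ : α → β) (k : α → M) (b : β) :
    pushforward φ k b = ∑ a ∈ univ.filter (fun a => φ a = b), k a := by
  simp [pushforward, Pi.single_apply, sum_filter, eq_comm]

lemma pushforward_single [DecidableEq α] (φ : α → β) (a : α) (m : M) :
    pushforward φ (Pi.single a m) = Pi.single (φ a) m := by
  rw [pushforward_eq_sum, sum_eq_single a _ (by simp), Pi.single_eq_same]
  intro b _ hb
  rw [Pi.single_eq_of_ne hb, Pi.single_zero]

lemma pushforward_pushforward {γ : Type*} [Fintype β] [DecidableEq γ] (ψ : β → γ) (φ : α → β)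
    (k : α → M) : pushforward ψ (pushforward φ k) = pushforward (ψ ∘ φ) k := by
  rw [pushforward_eq_sum φ, map_sum]
  simp only [pushforward_single]
  rfl

lemma pushforward_id [DecidableEq α] (k : α → M) : pushforward id k = k :=
  univ_sum_single k

lemma pushforward_congr {φ ψ : α → β} {k : α → M} (h : ∀ a, k a ≠ 0 → φ a = ψ a) :
    pushforward φ k = pushforward ψ k := by
  refine sum_congr rfl fun a _ => ?_
  by_cases ha : k a = 0
  · simp [ha]
  · rw [h a ha]

lemma pushforward_sub_pushforward_mem {M : Type*} [AddCommGroup M] {S : AddSubgroup (β → M)}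
    {φ ψ : α → β} (h : ∀ a m, Pi.single (φ a) m - Pi.single (ψ a) m ∈ S) (k : α → M) :
    pushforward φ k - pushforward ψ k ∈ S := by
  rw [pushforward_eq_sum, pushforward_eq_sum, ← sum_sub_distrib]
  exact sum_mem fun a _ => h a (k a)

end Pushforward

section Pullback

variable {α β M : Type*} [AddCommMonoid M]

def pullback (φ : α → β) : (β → M) →+ (α → M) where
  toFun u := u ∘ φ
  map_zero' := rfl
  map_add' _ _ := rfl

lemma pullback_apply (φ : α → β) (u : β → M) (a : α) : pullback φ u a = u (φ a) :=
  rfl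

lemma pullback_injective {φ : α → β} (hφ : Function.Surjective φ) :
    Function.Injective (pullback (M := M) φ) :=
  hφ.injective_comp_right

end Pullback

section Components

variable {V E : Type} (tl hd : E → V)

def EdgeRel (X : Finset E) (a b : V) : Prop :=
  ∃ e ∈ X, (tl e = a ∧ hd e = b) ∨ (tl e = b ∧ hd e = a)

abbrev Component (X : Finset E) : Type := Quot (EdgeRel tl hd X)

abbrev component (X : Finset E) : V → Component tl hd X := Quot.mk _

lemma component_surjective (X : Finset E) : Function.Surjective (component tl hd X) :=
  Quot.mk_surjective

variable {tl hd} in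
lemma component_tl_eq_hd {X : Finset E} {e : E} (he : e ∈ X) :
    component tl hd X (tl e) = component tl hd X (hd e) :=
  Quot.sound ⟨e, he, .inl ⟨rfl, rfl⟩⟩

variable {tl hd} in
lemma component_eq_of_subset {X Y : Finset E} (hXY : X ⊆ Y) {a b : V}
    (h : component tl hd X a = component tl hd X b) : component tl hd Y a = component tl hd Y b :=
  Quot.eqvGen_sound ((Quot.eqvGen_exact h).mono fun _ _ ⟨e, he, h'⟩ => ⟨e, hXY he, h'⟩)

variable [Fintype V]

instance (X : Finset E) : Finite (Component tl hd X) :=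
  Finite.of_surjective _ (component_surjective tl hd X)

lemma card_component_le (X : Finset E) : Nat.card (Component tl hd X) ≤ Fintype.card V :=
  Nat.card_eq_fintype_card (α := V) ▸
    Nat.card_le_card_of_surjective _ (component_surjective tl hd X)

lemma card_component_le_of_subset {X Y : Finset E} (hXY : X ⊆ Y) :
    Nat.card (Component tl hd Y) ≤ Nat.card (Component tl hd X) :=
  Nat.card_le_card_of_surjective
    (Quot.lift (component tl hd Y) fun _ _ h => component_eq_of_subset hXY (Quot.sound h))
    (Quot.ind fun v => ⟨component tl hd X v, rfl⟩)

lemma grank_eq (X : Finset E) : grank tl hd X = Fintype.card V - Nat.card (Component tl hd X) :=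
  rfl

open Classical in
lemma card_ker_pushforward_component {B : Type} [AddCommGroup B] [Fintype B] (X : Finset E) :
    Nat.card (pushforward (component tl hd X) (M := B)).ker = Fintype.card B ^ grank tl hd X := by
  have := Fintype.ofFinite (Component tl hd X)
  set s := Function.surjInv (component_surjective tl hd X)
  have hsurj : Function.Surjective (pushforward (component tl hd X) (M := B)) := fun u =>
    ⟨pushforward s u, by
      rw [pushforward_pushforward, Function.comp_def]
      simp only [s, Function.surjInv_eq]
      exact pushforward_id u⟩
  have hcard := (pushforward (component tl hd X) (M := B)).ker.card_mul_index
  rw [AddSubgroup.index_ker, AddMonoidHom.range_eq_top.2 hsurj, AddSubgroup.card_top,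
    Nat.card_fun, Nat.card_fun, Nat.card_eq_fintype_card (α := B),
    Nat.card_eq_fintype_card (α := V)] at hcard
  exact Nat.eq_pow_sub_of_pow_eq_mul_pow Fintype.card_pos hcard.symm

end Components

section Tensions

variable {V E A : Type} {tl hd : E → V} [AddCommGroup A]

variable (tl hd) in
def coboundary : (V → A) →+ (E → A) :=
  pullback tl - pullback hd

lemma mem_range_pullback_component_iff {X : Finset E} {p : V → A} :
    p ∈ (pullback (component tl hd X)).range ↔ ∀ e ∈ X, p (tl e) = p (hd e) := by
  refine ⟨?_, fun h => ⟨Quot.lift p ?_, rfl⟩⟩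
  · rintro ⟨u, rfl⟩ e he
    exact congrArg u (component_tl_eq_hd he)
  · rintro a b ⟨e, he, ⟨rfl, rfl⟩ | ⟨rfl, rfl⟩⟩
    exacts [h e he, (h e he).symm]

lemma ker_coboundary [Fintype E] :
    (coboundary tl hd (A := A)).ker = (pullback (component tl hd univ)).range := by
  ext p
  rw [mem_range_pullback_component_iff, AddMonoidHom.mem_ker, funext_iff]
  simp [coboundary, pullback_apply, sub_eq_zero]

lemma mem_map_coboundary_iff {X : Finset E} {f : E → A} :
    f ∈ (pullback (component tl hd X)).range.map (coboundary tl hd) ↔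
      IsTension tl hd f ∧ ∀ e ∈ X, f e = 0 := by
  simp only [AddSubgroup.mem_map, mem_range_pullback_component_iff]
  constructor
  · rintro ⟨p, hp, rfl⟩
    exact ⟨⟨p, fun e => rfl⟩, fun e he => sub_eq_zero.2 (hp e he)⟩
  · rintro ⟨⟨p, hp⟩, hX⟩
    exact ⟨p, fun e he => sub_eq_zero.1 ((hp e).symm.trans (hX e he)),
      funext fun e => (hp e).symm⟩

variable [Fintype V] [Fintype A]

lemma card_range_pullback_component (X : Finset E) :
    Nat.card (pullback (component tl hd X) (M := A)).range =
      Fintype.card A ^ Nat.card (Component tl hd X) := by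
  rw [← Nat.card_congr (AddMonoidHom.ofInjective
    (pullback_injective (component_surjective tl hd X))).toEquiv, Nat.card_fun,
    Nat.card_eq_fintype_card]

open Classical in
lemma card_tensions_vanishingOn [Fintype E] (X : Finset E) :
    #(univ.filter fun f : E → A => IsTension tl hd f ∧ ∀ e ∈ X, f e = 0) =
      Fintype.card A ^ (grank tl hd univ - grank tl hd X) := by
  set K := (pullback (component tl hd X) (M := A)).range
  have hker : (coboundary tl hd).ker ⊓ K = (coboundary tl hd).ker := by
    refine inf_eq_left.2 fun p hp => ?_
    rw [ker_coboundary, mem_range_pullback_component_iff] at hp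
    exact mem_range_pullback_component_iff.2 fun e _ => hp e (mem_univ e)
  have hcard := K.card_eq_card_inf_ker_mul_card_map (coboundary tl hd)
  rw [hker, ker_coboundary, card_range_pullback_component, card_range_pullback_component] at hcard
  have hN : #(univ.filter fun f : E → A => IsTension tl hd f ∧ ∀ e ∈ X, f e = 0) =
      Nat.card (K.map (coboundary tl hd)) := by
    rw [← Fintype.card_subtype, ← Nat.card_eq_fintype_card]
    exact Nat.card_congr (Equiv.subtypeEquivRight fun f => mem_map_coboundary_iff.symm)
  rw [hN, Nat.eq_pow_sub_of_pow_eq_mul_pow Fintype.card_pos (hcard.trans (mul_comm _ _)),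
    grank_eq, grank_eq]
  have := card_component_le tl hd X
  have := card_component_le_of_subset tl hd (subset_univ X)
  congr 1
  omega

end Tensions

section Flows

variable {V E B : Type} {tl hd : E → V} [AddCommGroup B]

def supportedOn (X : Finset E) : AddSubgroup (E → B) where
  carrier := {g | ∀ e ∉ X, g e = 0}
  add_mem' hg hh e he := by simp [hg e he, hh e he]
  zero_mem' _ _ := rfl
  neg_mem' hg e he := by simp [hg e he]

lemma mem_supportedOn {X : Finset E} {g : E → B} : g ∈ supportedOn X ↔ ∀ e ∉ X, g e = 0 :=
  Iff.rfl

lemma card_supportedOn [Fintype E] [Fintype B] (X : Finset E) :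
    Nat.card (supportedOn X (B := B)) = Fintype.card B ^ #X := by
  classical
  have hpi : univ.filter (· ∈ supportedOn X) =
      Fintype.piFinset fun e => if e ∈ X then (univ : Finset B) else {0} := by
    ext g
    simp only [mem_filter, mem_univ, true_and, mem_supportedOn, Fintype.mem_piFinset]
    refine forall_congr' fun e => ?_
    split_ifs with he <;> simp [he]
  rw [Nat.card_eq_fintype_card, Fintype.card_subtype, hpi, Fintype.card_piFinset]
  simp [apply_ite, prod_ite_mem]

variable [Fintype E] [DecidableEq V]

variable (tl hd) in
def boundary : (E → B) →+ (V → B) :=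
  pushforward tl - pushforward hd

lemma boundary_single [DecidableEq E] (e : E) (b : B) :
    boundary tl hd (Pi.single e b) = Pi.single (tl e) b - Pi.single (hd e) b := by
  rw [boundary, AddMonoidHom.sub_apply, pushforward_single, pushforward_single]

lemma isFlow_iff_boundary_eq_zero {g : E → B} : IsFlow tl hd g ↔ boundary tl hd g = 0 := by
  rw [boundary, AddMonoidHom.sub_apply, sub_eq_zero, funext_iff]
  simp only [pushforward_apply]
  rfl

lemma single_sub_single_mem_map_boundary [DecidableEq E] {X : Finset E} {u v : V}
    (h : component tl hd X u = component tl hd X v) (b : B) :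
    (Pi.single u b - Pi.single v b : V → B) ∈ (supportedOn X).map (boundary tl hd) := by
  have hedge : ∀ e ∈ X, (Pi.single (tl e) b - Pi.single (hd e) b : V → B) ∈
      (supportedOn X).map (boundary tl hd) := fun e he =>
    ⟨Pi.single e b, fun e' he' => Pi.single_eq_of_ne (ne_of_mem_of_not_mem he he').symm _,
      boundary_single e b⟩
  have hrel := Quot.eqvGen_exact h
  clear h
  induction hrel with
  | rel a c hac =>
    obtain ⟨e, he, ⟨rfl, rfl⟩ | ⟨rfl, rfl⟩⟩ := hac
    · exact hedge e he
    · rw [← neg_sub]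
      exact neg_mem (hedge e he)
  | refl => simp
  | symm _ _ _ ih =>
    rw [← neg_sub]
    exact neg_mem ih
  | trans _ w _ _ _ ih₁ ih₂ =>
    rw [← sub_add_sub_cancel _ (Pi.single w b)]
    exact add_mem ih₁ ih₂

open Classical in
lemma map_boundary_supportedOn [Fintype V] (X : Finset E) :
    (supportedOn X).map (boundary tl hd) = (pushforward (component tl hd X) (M := B)).ker := by
  ext h
  constructor
  · rintro ⟨g, hg, rfl⟩
    rw [AddMonoidHom.mem_ker, boundary, AddMonoidHom.sub_apply, map_sub, pushforward_pushforward,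
      pushforward_pushforward, sub_eq_zero]
    refine pushforward_congr fun e hge => component_tl_eq_hd ?_
    by_contra he
    exact hge (hg e he)
  · intro hh
    have := Fintype.ofFinite (Component tl hd X)
    set s := Function.surjInv (component_surjective tl hd X)
    have hs : ∀ v, component tl hd X v = component tl hd X (s (component tl hd X v)) :=
      fun v => (Function.surjInv_eq _ _).symm
    -- `h` is the sum of the transfers of each `h v` from `v` to the chosen vertex of its
    -- component, since the total mass moved to that vertex is the component sum of `h`, i.e. `0`.
    have hsplit : h = pushforward id h - pushforward (s ∘ component tl hd X) h := by
      rw [← pushforward_pushforward, AddMonoidHom.mem_ker.1 hh, map_zero, sub_zero,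
        pushforward_id]
    rw [hsplit]
    exact pushforward_sub_pushforward_mem
      (fun v b => single_sub_single_mem_map_boundary (hs v) b) h

open Classical in
lemma card_flows_supportedOn [Fintype V] [Fintype B] (X : Finset E) :
    #(univ.filter fun g : E → B => IsFlow tl hd g ∧ ∀ e ∉ X, g e = 0) =
      Fintype.card B ^ (#X - grank tl hd X) := by
  have hcard := (supportedOn X (B := B)).card_eq_card_inf_ker_mul_card_map (boundary tl hd)
  rw [card_supportedOn, map_boundary_supportedOn, card_ker_pushforward_component] at hcard
  rw [← Nat.eq_pow_sub_of_pow_eq_mul_pow Fintype.card_pos hcard, ← Fintype.card_subtype,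
    ← Nat.card_eq_fintype_card]
  refine Nat.card_congr (Equiv.subtypeEquivRight fun g => ?_)
  rw [AddSubgroup.mem_inf, AddMonoidHom.mem_ker, ← isFlow_iff_boundary_eq_zero, mem_supportedOn]

end Flows

section DoubleCounting

variable {V E A B : Type} [Fintype E] [DecidableEq E]

open Classical in
lemma card_between_support_and_zeros [Zero A] [Zero B] {f : E → A} {g : E → B}
    (hfg : ∀ e, g e ≠ 0 → f e = 0) :
    #(univ.filter fun X : Finset E => (∀ e ∈ X, f e = 0) ∧ ∀ e ∉ X, g e = 0) =
      2 ^ #(univ.filter (fun e => f e = 0) \ univ.filter (fun e => g e ≠ 0)) := by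
  have hsub : univ.filter (fun e => g e ≠ 0) ⊆ univ.filter (fun e => f e = 0) := by
    intro e
    simpa using hfg e
  rw [card_sdiff_of_subset hsub, ← card_Icc_finset hsub]
  congr 1
  ext X
  simp only [mem_filter, mem_univ, true_and, mem_Icc, subset_iff]
  exact and_comm.trans (and_congr (forall_congr' fun e => not_imp_comm) Iff.rfl)

open Classical in
lemma card_tensionFlows_between [Fintype V] [DecidableEq V] [AddCommGroup A] [Fintype A]
    [AddCommGroup B] [Fintype B] (tl hd : E → V) (X : Finset E) :
    #(univ.filter fun fg : (E → A) × (E → B) =>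
        (IsTension tl hd fg.1 ∧ IsFlow tl hd fg.2 ∧ ∀ e, fg.2 e ≠ 0 → fg.1 e = 0) ∧
          (∀ e ∈ X, fg.1 e = 0) ∧ ∀ e ∉ X, fg.2 e = 0) =
      Fintype.card A ^ (grank tl hd univ - grank tl hd X) *
        Fintype.card B ^ (#X - grank tl hd X) := by
  rw [← card_tensions_vanishingOn, ← card_flows_supportedOn, ← card_product]
  congr 1
  ext ⟨f, g⟩
  simp only [mem_filter, mem_univ, true_and, mem_product]
  constructor
  · rintro ⟨⟨hf, hg, -⟩, hfX, hgX⟩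
    exact ⟨⟨hf, hfX⟩, hg, hgX⟩
  · rintro ⟨⟨hf, hfX⟩, hg, hgX⟩
    exact ⟨⟨hf, hg, fun e he => hfX e (not_imp_comm.1 (hgX e) he)⟩, hfX, hgX⟩

end DoubleCounting

end TensionFlow

open TensionFlow
open Classical in
/-- Whitney's rank generating polynomial evaluated at the orders `p, q` of
finite abelian groups `A, B` satisfies
`R(G;p,q) = ∑ 2^{|ker f - supp g|}`, summed over all tension-flows `(f,g)`
with `supp g ⊆ ker f`. -/
theorem stmt9 {V E A B : Type} [Fintype V] [Fintype E] [DecidableEq V] [DecidableEq E]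
    [AddCommGroup A] [Fintype A] [AddCommGroup B] [Fintype B]
    (tl hd : E → V) (p q : ℕ) (hp : Fintype.card A = p) (hq : Fintype.card B = q) :
    ∑ X : Finset E, p ^ (grank tl hd Finset.univ - grank tl hd X) *
        q ^ (X.card - grank tl hd X)
    = ∑ fg ∈ Finset.univ.filter (fun fg : (E → A) × (E → B) =>
          IsTension tl hd fg.1 ∧ IsFlow tl hd fg.2 ∧
          ∀ e : E, fg.2 e ≠ 0 → fg.1 e = 0),
        2 ^ ((Finset.univ.filter (fun e => fg.1 e = 0)) \
              (Finset.univ.filter (fun e => fg.2 e ≠ 0))).card := by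
  subst hp hq
  set P := univ.filter fun fg : (E → A) × (E → B) =>
    IsTension tl hd fg.1 ∧ IsFlow tl hd fg.2 ∧ ∀ e, fg.2 e ≠ 0 → fg.1 e = 0
  let between (fg : (E → A) × (E → B)) (X : Finset E) : Prop :=
    (∀ e ∈ X, fg.1 e = 0) ∧ ∀ e ∉ X, fg.2 e = 0
  have hX (X : Finset E) : #(P.bipartiteBelow between X) =
      Fintype.card A ^ (grank tl hd univ - grank tl hd X) *
        Fintype.card B ^ (#X - grank tl hd X) := by
    rw [bipartiteBelow, filter_filter, card_tensionFlows_between]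
  have hfg (fg) (hmem : fg ∈ P) : #(univ.bipartiteAbove between fg) =
      2 ^ #(univ.filter (fun e => fg.1 e = 0) \ univ.filter (fun e => fg.2 e ≠ 0)) :=
    card_between_support_and_zeros (mem_filter.1 hmem).2.2.2
  rw [← sum_congr rfl fun X _ => hX X, ← sum_card_bipartiteAbove_eq_sum_card_bipartiteBelow,
    sum_congr rfl hfg]
end

section
/- Let G be a finite graph with orientation ρ, and let Δ⁺_CTF(G,ρ) = {(f,g) ∈ K(G,ρ) : 0 < f + g < 1} be the open complementary polytope, where K(G,ρ) is the set of real complementary tension-flows. Then Δ⁺_CTF(G,ρ) decomposes as the cartesian product Δ⁺_TN(G,B_ρ) × Δ⁺_FL(G,C_ρ), where Δ⁺_TN(G,B_ρ) = {f ∈ T(G,ρ) : 0 < f|_{B_ρ} < 1, f|_{C_ρ} = 0} and Δ⁺_FL(G,C_ρ) = {g ∈ F(G,ρ) : g|_{B_ρ} = 0, 0 < g|_{C_ρ} < 1}. -/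
/-- A directed circuit of the digraph given by `tl, hd : E → V`: a cyclically
ordered nonempty list of distinct edges with distinct vertices, each edge's head
being the next edge's tail. `C` is its edge set. -/
def IsDirectedCircuit {V E : Type} (tl hd : E → V) (C : Set E) : Prop :=
  ∃ l : List E, l ≠ [] ∧ l.Nodup ∧ (l.map tl).Nodup ∧ C = {e | e ∈ l} ∧
    ∀ i : Fin l.length,
      hd (l.get i) = tl (l.get ⟨(i.1 + 1) % l.length, Nat.mod_lt _ i.pos⟩)

/-- The set of edges between `S` and its complement. -/
def cutSet {V E : Type} (tl hd : E → V) (S : Set V) : Set E :=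
  {e | (tl e ∈ S ∧ hd e ∉ S) ∨ (tl e ∉ S ∧ hd e ∈ S)}

/-- A cut: a nonempty edge set of the form `[S, Sᶜ]`. -/
def IsCut {V E : Type} (tl hd : E → V) (C : Set E) : Prop :=
  ∃ S : Set V, C = cutSet tl hd S ∧ C.Nonempty

/-- A bond: a cut not properly containing any cut. -/
def IsBond {V E : Type} (tl hd : E → V) (C : Set E) : Prop :=
  IsCut tl hd C ∧ ∀ C', IsCut tl hd C' → C' ⊆ C → C' = C

/-- A directed bond: a bond all of whose edges are oriented from `S` to `Sᶜ`. -/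
def IsDirectedBond {V E : Type} (tl hd : E → V) (C : Set E) : Prop :=
  IsBond tl hd C ∧ ∃ S : Set V, C = cutSet tl hd S ∧ ∀ e ∈ C, tl e ∈ S ∧ hd e ∉ S

/-- `B_ρ`: the union of the edge sets of all directed bonds. -/
def bondUnion {V E : Type} (tl hd : E → V) : Set E :=
  {e | ∃ C, IsDirectedBond tl hd C ∧ e ∈ C}

/-- `C_ρ`: the union of the edge sets of all directed circuits. -/
def circUnion {V E : Type} (tl hd : E → V) : Set E :=
  {e | ∃ C, IsDirectedCircuit tl hd C ∧ e ∈ C}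


/-!
Where `f` and `g` have complementary supports and `0 < f + g`, both are nonnegative. A nonnegative
tension sums to zero around a directed circuit, and a nonnegative flow has zero net flow out of the
source side of a directed cut, so `f` vanishes on `C_ρ` and `g` on `B_ρ`. Conversely every edge `e`
lies in `B_ρ ∪ C_ρ`: either a shortest directed walk from the head of `e` back to its tail closes up
a directed circuit through `e`, or the vertices not reachable from the head of `e` are the source
side of a directed cut through `e`, and an inclusion-minimal such cut is a bond.
-/

section Cuts

variable {V E : Type} {tl hd : E → V} {S T : Set V}

def IsDirectedCut (tl hd : E → V) (S : Set V) : Prop :=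
  ∀ e ∈ cutSet tl hd S, tl e ∈ S ∧ hd e ∉ S

lemma cutSet_compl (tl hd : E → V) (S : Set V) : cutSet tl hd Sᶜ = cutSet tl hd S := by
  ext e
  simp only [cutSet, Set.mem_ofPred_eq, Set.mem_compl_iff]
  tauto

lemma cutSet_sdiff_cutSet (h : cutSet tl hd T ⊆ cutSet tl hd S) :
    cutSet tl hd S \ cutSet tl hd T = cutSet tl hd (symmDiff S T) := by
  ext e
  have := @h e
  simp only [cutSet, Set.mem_ofPred_eq, Set.mem_sdiff, Set.mem_symmDiff] at *
  tauto

lemma cutSet_inter_subset (h : cutSet tl hd T ⊆ cutSet tl hd S) :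
    cutSet tl hd (S ∩ T) ⊆ cutSet tl hd S := by
  intro e he
  have := @h e
  simp only [cutSet, Set.mem_ofPred_eq, Set.mem_inter_iff] at *
  tauto

lemma mem_cutSet_inter {e : E} (hS : IsDirectedCut tl hd S)
    (h : cutSet tl hd T ⊆ cutSet tl hd S) (he : e ∈ cutSet tl hd T) (heT : tl e ∈ T) :
    e ∈ cutSet tl hd (S ∩ T) :=
  Or.inl ⟨⟨(hS e (h he)).1, heT⟩, fun hhd => (hS e (h he)).2 hhd.1⟩

lemma IsDirectedCut.inter (hS : IsDirectedCut tl hd S) (h : cutSet tl hd T ⊆ cutSet tl hd S) :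
    IsDirectedCut tl hd (S ∩ T) := by
  intro e he
  have := @h e
  have := hS e
  simp only [cutSet, IsDirectedCut, Set.mem_ofPred_eq, Set.mem_inter_iff] at *
  tauto

lemma IsDirectedCut.of_cutSet_inter_eq (hS : IsDirectedCut tl hd S)
    (h : cutSet tl hd T ⊆ cutSet tl hd S) (heq : cutSet tl hd (S ∩ T) = cutSet tl hd S) :
    IsDirectedCut tl hd T := by
  intro e he
  have hT : tl e ∈ T := ((hS.inter h) e (heq ▸ h he)).1.2
  exact ⟨hT, fun hhd => he.elim (fun h' => h'.2 hhd) (fun h' => h'.1 hT)⟩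

lemma mem_bondUnion_of_isDirectedCut [Finite E] {e : E}
    (hS : IsDirectedCut tl hd S) (he : e ∈ cutSet tl hd S) : e ∈ bondUnion tl hd := by
  obtain ⟨_, ⟨he₀, S₀, rfl, hS₀⟩, hmin⟩ := exists_minimal_of_wellFoundedLT
    (fun C => e ∈ C ∧ ∃ S, C = cutSet tl hd S ∧ IsDirectedCut tl hd S) ⟨_, he, S, rfl, hS⟩
  have hcut : ∀ T, e ∈ cutSet tl hd T → cutSet tl hd T ⊆ cutSet tl hd S₀ →
      cutSet tl hd T = cutSet tl hd S₀ := by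
    intro T heT hsub
    wlog htl : tl e ∈ T generalizing T
    · simpa only [cutSet_compl] using
        this Tᶜ (by rwa [cutSet_compl]) (by rwa [cutSet_compl]) htl
    have hinter : cutSet tl hd (S₀ ∩ T) = cutSet tl hd S₀ :=
      (cutSet_inter_subset hsub).antisymm <| hmin
        ⟨mem_cutSet_inter hS₀ hsub heT htl, _, rfl, hS₀.inter hsub⟩ (cutSet_inter_subset hsub)
    exact hsub.antisymm (hmin ⟨heT, T, rfl, hS₀.of_cutSet_inter_eq hsub hinter⟩ hsub)
  refine ⟨cutSet tl hd S₀, ⟨⟨⟨S₀, rfl, e, he₀⟩, ?_⟩, S₀, rfl, hS₀⟩, he₀⟩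
  rintro _ ⟨T, rfl, d, hdT⟩ hsub
  by_cases heT : e ∈ cutSet tl hd T
  · exact hcut T heT hsub
  · -- `cutSet S₀ \ cutSet T` is a cut through `e`, so by `hcut` it is all of `cutSet S₀`
    have hdiff := cutSet_sdiff_cutSet hsub
    have hdisj := hcut _ (hdiff ▸ ⟨he₀, heT⟩) (hdiff ▸ Set.sdiff_subset)
    rw [← hdiff] at hdisj
    exact absurd hdT (hdisj ▸ hsub hdT).2

end Cuts

section Walks

variable {V E : Type} {tl hd : E → V}

def IsWalk (tl hd : E → V) : List E → V → V → Prop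
  | [], a, b => a = b
  | e :: l, a, b => tl e = a ∧ IsWalk tl hd l (hd e) b

def IsCyclicWalk (tl hd : E → V) (l : List E) : Prop :=
  l.map hd = (l.map tl).rotate 1

lemma isWalk_append {l₁ l₂ : List E} {a b : V} :
    IsWalk tl hd (l₁ ++ l₂) a b ↔ ∃ c, IsWalk tl hd l₁ a c ∧ IsWalk tl hd l₂ c b := by
  induction l₁ generalizing a with
  | nil => simp [IsWalk]
  | cons e l₁ ih => simp [IsWalk, ih, and_assoc]

lemma IsWalk.take_drop {l : List E} {a b : V} (h : IsWalk tl hd l a b) {i : ℕ}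
    (hi : i < l.length) :
    IsWalk tl hd (l.take i) a (tl l[i]) ∧ IsWalk tl hd (l.drop i) (tl l[i]) b := by
  rw [← List.take_append_drop i l, isWalk_append] at h
  obtain ⟨c, htake, hdrop⟩ := h
  rw [List.drop_eq_getElem_cons hi] at hdrop ⊢
  obtain ⟨rfl, hrest⟩ := hdrop
  exact ⟨htake, rfl, hrest⟩

lemma IsWalk.cons_map_hd {l : List E} {a b : V} (h : IsWalk tl hd l a b) :
    a :: l.map hd = l.map tl ++ [b] := by
  induction l generalizing a with
  | nil => simpa [IsWalk] using h
  | cons e l ih => simp [h.1, ih h.2]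

lemma IsWalk.isCyclicWalk_cons {l : List E} {e : E} (h : IsWalk tl hd l (hd e) (tl e)) :
    IsCyclicWalk tl hd (e :: l) := by
  simp [IsCyclicWalk, h.cons_map_hd]

lemma IsWalk.nodup_of_minimal {l : List E} {a b : V} (h : IsWalk tl hd l a b)
    (hmin : ∀ l', IsWalk tl hd l' a b → l.length ≤ l'.length) : (b :: l.map tl).Nodup := by
  rw [List.nodup_cons, List.Nodup, List.pairwise_map, List.pairwise_iff_getElem]
  constructor
  · intro hmem
    obtain ⟨_, hmem, hb⟩ := List.mem_map.1 hmem
    obtain ⟨i, hi, rfl⟩ := List.getElem_of_mem hmem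
    have := hmin _ (hb ▸ (h.take_drop hi).1)
    simp only [List.length_take] at this
    omega
  · intro i j hi hj hij heq
    have := hmin _ (isWalk_append.2 ⟨_, (h.take_drop hi).1, heq ▸ (h.take_drop hj).2⟩)
    simp only [List.length_append, List.length_take, List.length_drop] at this
    omega

lemma isCyclicWalk_iff_forall_get (l : List E) :
    IsCyclicWalk tl hd l ↔ ∀ i : Fin l.length,
      hd (l.get i) = tl (l.get ⟨(i.1 + 1) % l.length, Nat.mod_lt _ i.pos⟩) := by
  simp [IsCyclicWalk, List.ext_getElem_iff, Fin.forall_iff]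

lemma mem_circUnion_of_isWalk {l : List E} {e : E} (h : IsWalk tl hd l (hd e) (tl e)) :
    e ∈ circUnion tl hd := by
  obtain ⟨l, hl, hmin⟩ := exists_minimalFor_of_wellFoundedLT
    (fun l => IsWalk tl hd l (hd e) (tl e)) List.length ⟨l, h⟩
  have hnodup : ((e :: l).map tl).Nodup :=
    hl.nodup_of_minimal fun l' hl' => (le_total _ _).elim (hmin hl') id
  exact ⟨_, ⟨e :: l, List.cons_ne_nil _ _, hnodup.of_map tl, hnodup, rfl,
    (isCyclicWalk_iff_forall_get _).1 hl.isCyclicWalk_cons⟩, List.mem_cons_self⟩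

end Walks

section TensionsAndFlows

variable {V E A : Type} {tl hd : E → V} [AddCommGroup A]

lemma IsFlow.sum_tl_mem_eq_sum_hd_mem [Fintype E] [DecidableEq V] {g : E → A}
    (hg : IsFlow tl hd g) (S : Set V) [DecidablePred (· ∈ S)] :
    ∑ e with tl e ∈ S, g e = ∑ e with hd e ∈ S, g e := by
  set T := (Finset.univ.image tl ∪ Finset.univ.image hd).filter (· ∈ S)
  have hT : ∀ e, (tl e ∈ T ↔ tl e ∈ S) ∧ (hd e ∈ T ↔ hd e ∈ S) := by simp [T]
  calc ∑ e with tl e ∈ S, g e = ∑ e with tl e ∈ T, g e := by simp only [hT]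
    _ = ∑ v ∈ T, ∑ e with tl e = v, g e := (Finset.sum_fiberwise_eq_sum_filter _ _ _ _).symm
    _ = ∑ v ∈ T, ∑ e with hd e = v, g e := Finset.sum_congr rfl fun v _ => hg v
    _ = ∑ e with hd e ∈ S, g e := by
      rw [Finset.sum_fiberwise_eq_sum_filter]
      simp only [hT]

variable [PartialOrder A] [IsOrderedAddMonoid A]

lemma IsTension.eq_zero_of_isCyclicWalk {f : E → A} (hf : IsTension tl hd f)
    (hpos : ∀ e, 0 ≤ f e) {l : List E} (hl : IsCyclicWalk tl hd l) {e : E} (he : e ∈ l) :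
    f e = 0 := by
  obtain ⟨p, hp⟩ := hf
  have hsum : (l.map f).sum = 0 :=
    calc (l.map f).sum = ((l.map tl).map p).sum - ((l.map hd).map p).sum := by
          rw [eq_sub_iff_add_eq, List.map_map, List.map_map, ← List.sum_map_add]
          simp [hp, Function.comp_def]
      _ = 0 := by rw [hl, List.map_rotate, (List.rotate_perm _ _).sum_eq, sub_self]
  exact List.all_zero_of_le_zero_le_of_sum_eq_zero (by simp [hpos]) hsum (List.mem_map_of_mem he)

lemma IsTension.eq_zero_of_mem_circUnion {f : E → A} (hf : IsTension tl hd f)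
    (hpos : ∀ e, 0 ≤ f e) {e : E} (he : e ∈ circUnion tl hd) : f e = 0 := by
  obtain ⟨_, ⟨l, -, -, -, rfl, hcyc⟩, he⟩ := he
  exact hf.eq_zero_of_isCyclicWalk hpos ((isCyclicWalk_iff_forall_get l).2 hcyc) he

variable [Fintype E] [DecidableEq V]

lemma IsFlow.eq_zero_of_isDirectedCut {g : E → A} (hg : IsFlow tl hd g)
    (hpos : ∀ e, 0 ≤ g e) {S : Set V} (hS : IsDirectedCut tl hd S) {e : E}
    (he : e ∈ cutSet tl hd S) : g e = 0 := by
  classical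
  have hsub : Finset.univ.filter (hd · ∈ S) ⊆ Finset.univ.filter (tl · ∈ S) := by
    simp only [Finset.subset_iff, Finset.mem_filter_univ]
    intro d hdS
    by_contra htl
    exact htl (hS d (Or.inr ⟨htl, hdS⟩)).1
  have hout : ∑ d ∈ Finset.univ.filter (tl · ∈ S) \ Finset.univ.filter (hd · ∈ S), g d = 0 :=
    add_eq_right.1 ((Finset.sum_sdiff hsub).trans (hg.sum_tl_mem_eq_sum_hd_mem S))
  exact (Finset.sum_eq_zero_iff_of_nonneg (fun d _ => hpos d)).1 hout e (by simpa using hS e he)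

lemma IsFlow.eq_zero_of_mem_bondUnion {g : E → A} (hg : IsFlow tl hd g)
    (hpos : ∀ e, 0 ≤ g e) {e : E} (he : e ∈ bondUnion tl hd) : g e = 0 := by
  obtain ⟨_, ⟨-, S, rfl, hS⟩, he⟩ := he
  exact hg.eq_zero_of_isDirectedCut hpos hS he

end TensionsAndFlows

lemma mem_bondUnion_or_mem_circUnion {V E : Type} [Finite E] (tl hd : E → V) (e : E) :
    e ∈ bondUnion tl hd ∨ e ∈ circUnion tl hd := by
  by_cases hcirc : ∃ l, IsWalk tl hd l (hd e) (tl e)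
  · exact .inr (mem_circUnion_of_isWalk hcirc.choose_spec)
  · -- no edge leaves the set of vertices reachable from `hd e`, so its complement is a directed cut
    refine .inl (mem_bondUnion_of_isDirectedCut (S := {v | ¬∃ l, IsWalk tl hd l (hd e) v}) ?_
      (.inl ⟨hcirc, not_not.2 ⟨[], rfl⟩⟩))
    rintro d (hout | ⟨hreach, hnreach⟩)
    · exact hout
    · obtain ⟨l, hl⟩ := not_not.1 hreach
      exact absurd ⟨l ++ [d], isWalk_append.2 ⟨_, hl, rfl, rfl⟩⟩ hnreach

lemma complementary_and_mem_Ioo_iff {α : Type*} [AddZeroClass α] [One α] [Preorder α]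
    {x y : α} :
    ((y ≠ 0 ↔ x = 0) ∧ 0 < x + y ∧ x + y < 1) ↔
      (y = 0 ∧ 0 < x ∧ x < 1) ∨ (x = 0 ∧ 0 < y ∧ y < 1) := by
  by_cases hx : x = 0 <;> by_cases hy : y = 0 <;> simp [hx, hy]

theorem stmt19_general {V E : Type} [Fintype E] [DecidableEq V]
    (tl hd : E → V) :
    {fg : (E → ℝ) × (E → ℝ) |
        IsTension tl hd fg.1 ∧ IsFlow tl hd fg.2 ∧
        (∀ e : E, fg.2 e ≠ 0 ↔ fg.1 e = 0) ∧
        ∀ e : E, 0 < fg.1 e + fg.2 e ∧ fg.1 e + fg.2 e < 1}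
    = {f : E → ℝ | IsTension tl hd f ∧
          (∀ e ∈ bondUnion tl hd, 0 < f e ∧ f e < 1) ∧
          ∀ e ∈ circUnion tl hd, f e = 0} ×ˢ
      {g : E → ℝ | IsFlow tl hd g ∧
          (∀ e ∈ bondUnion tl hd, g e = 0) ∧
          ∀ e ∈ circUnion tl hd, 0 < g e ∧ g e < 1} := by
  ext ⟨f, g⟩
  simp only [Set.mem_ofPred_eq, Set.mem_prod]
  constructor
  · rintro ⟨hf, hg, hcompl, hbound⟩
    have hcases e := complementary_and_mem_Ioo_iff.1 ⟨hcompl e, hbound e⟩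
    have hfC : ∀ e ∈ circUnion tl hd, f e = 0 := fun _ =>
      hf.eq_zero_of_mem_circUnion fun e => (hcases e).elim (·.2.1.le) (·.1.ge)
    have hgB : ∀ e ∈ bondUnion tl hd, g e = 0 := fun _ =>
      hg.eq_zero_of_mem_bondUnion fun e => (hcases e).elim (·.1.ge) (·.2.1.le)
    refine ⟨⟨hf, fun e he => ?_, hfC⟩, hg, hgB, fun e he => ?_⟩
    · exact ((hcases e).resolve_right fun h => h.2.1.ne' (hgB e he)).2
    · exact ((hcases e).resolve_left fun h => h.2.1.ne' (hfC e he)).2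
  · rintro ⟨⟨hf, hfB, hfC⟩, hg, hgB, hgC⟩
    have hcases e := complementary_and_mem_Ioo_iff.2 <|
      (mem_bondUnion_or_mem_circUnion tl hd e).imp (fun he => ⟨hgB e he, hfB e he⟩)
        (fun he => ⟨hfC e he, hgC e he⟩)
    exact ⟨hf, hg, fun e => (hcases e).1, fun e => (hcases e).2⟩

/-- The open complementary polytope
`Δ⁺_CTF(G,ρ) = {(f,g) ∈ K(G,ρ) : 0 < f + g < 1}` (with `K(G,ρ)` the set of
real complementary tension-flows, `supp g = ker f`) decomposes as the cartesian
product `Δ⁺_TN(G,B_ρ) × Δ⁺_FL(G,C_ρ)`. -/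
theorem stmt19 {V E : Type} [Fintype V] [Fintype E] [DecidableEq V]
    (tl hd : E → V) :
    {fg : (E → ℝ) × (E → ℝ) |
        IsTension tl hd fg.1 ∧ IsFlow tl hd fg.2 ∧
        (∀ e : E, fg.2 e ≠ 0 ↔ fg.1 e = 0) ∧
        ∀ e : E, 0 < fg.1 e + fg.2 e ∧ fg.1 e + fg.2 e < 1}
    = {f : E → ℝ | IsTension tl hd f ∧
          (∀ e ∈ bondUnion tl hd, 0 < f e ∧ f e < 1) ∧
          ∀ e ∈ circUnion tl hd, f e = 0} ×ˢ
      {g : E → ℝ | IsFlow tl hd g ∧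
          (∀ e ∈ bondUnion tl hd, g e = 0) ∧
          ∀ e ∈ circUnion tl hd, 0 < g e ∧ g e < 1} :=
  stmt19_general tl hd
end
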